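/- arXiv:2506.20172 — 2 statements merged into one kernel-verified Lean document; each statement's English description precedes it below -/
import Mathlib

section
/- For n ≥ 2, the average QAP cost over all permutations satisfies E[Q_{A,B}(φ)] = (1/(n(n−1))) (Σ_{(i,j)∈M²} a_{ij}) (Σ_{(r,s)∈M²} b_{rs}) + (1/n) (Σ_{i∈N} a_{ii}) (Σ_{r∈N} b_{rr}), where the expectation is taken with φ uniformly distributed over S_n. -/
/-!
Exchanging the sums, the expected cost is `∑ i j, A i j * E[B (φ i) (φ j)]`. Since `Perm α` acts
2-transitively on `α` and right multiplication is a bijection of `Perm α`, the sum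
`∑ φ, B (φ i) (φ j)` depends only on whether `i = j`. Averaging it over all `i` (resp. all pairs
`i ≠ j`) and using that every `φ` permutes `α` (resp. the off-diagonal pairs) gives
`E[B (φ i) (φ i)] = (∑ r, B r r) / n` and `E[B (φ i) (φ j)] = (∑_{r ≠ s} B r s) / (n (n - 1))`.
-/

open Finset

/-- QAP cost function. -/
def qapCost {n : ℕ} (A B : Matrix (Fin n) (Fin n) ℝ) (φ : Equiv.Perm (Fin n)) : ℝ :=
  ∑ i, ∑ j, A i j * B (φ i) (φ j)

theorem Finset.sum_sum_eq_sum_add_sum_offDiag {α M : Type*} [DecidableEq α] [AddCommMonoid M]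
    (s : Finset α) (f : α → α → M) :
    ∑ i ∈ s, ∑ j ∈ s, f i j = ∑ i ∈ s, f i i + ∑ p ∈ s.offDiag, f p.1 p.2 := by
  rw [← sum_product' s s f, ← diag_union_offDiag, sum_union (disjoint_diag_offDiag s), sum_diag]

namespace Equiv.Perm

variable {α M : Type*} [Fintype α] [AddCommMonoid M]

theorem sum_offDiag_apply (φ : Perm α) (g : α → α → M) :
    ∑ p ∈ univ.offDiag, g (φ p.1) (φ p.2) = ∑ p ∈ univ.offDiag, g p.1 p.2 :=
  sum_equiv (φ.prodCongr φ) (by simp [φ.injective.ne_iff]) (fun _ _ => rfl)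

variable [DecidableEq α]

theorem sum_apply_eq_sum_apply (g : α → M) (i k : α) :
    ∑ φ : Perm α, g (φ i) = ∑ φ : Perm α, g (φ k) :=
  Fintype.sum_equiv (Equiv.mulRight (swap i k)) _ _ fun φ => by simp

theorem sum_apply₂_eq_sum_apply₂ (g : α → α → M) {i j k l : α} (hij : i ≠ j) (hkl : k ≠ l) :
    ∑ φ : Perm α, g (φ i) (φ j) = ∑ φ : Perm α, g (φ k) (φ l) := by
  obtain ⟨σ, hσk, hσl⟩ :=
    MulAction.is_two_pretransitive_iff.mp (isMultiplyPretransitive α 2) hkl hij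
  rw [Perm.smul_def] at hσk hσl
  exact Fintype.sum_equiv (Equiv.mulRight σ) _ _ fun φ => by
    rw [coe_mulRight, mul_apply, mul_apply, hσk, hσl]

theorem card_nsmul_sum_apply (g : α → M) (i : α) :
    Fintype.card α • ∑ φ : Perm α, g (φ i) = (Fintype.card α).factorial • ∑ r, g r := by
  calc Fintype.card α • ∑ φ : Perm α, g (φ i)
      = ∑ k : α, ∑ φ : Perm α, g (φ k) := by
        rw [← card_univ, ← sum_const]
        exact sum_congr rfl fun k _ => sum_apply_eq_sum_apply g i k
    _ = ∑ φ : Perm α, ∑ r, g r := by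
        rw [sum_comm]
        exact sum_congr rfl fun φ _ => Equiv.sum_comp φ g
    _ = (Fintype.card α).factorial • ∑ r, g r := by rw [sum_const, card_univ, Fintype.card_perm]

theorem card_offDiag_nsmul_sum_apply₂ (g : α → α → M) {i j : α} (hij : i ≠ j) :
    #(univ : Finset α).offDiag • ∑ φ : Perm α, g (φ i) (φ j) =
      (Fintype.card α).factorial • ∑ p ∈ univ.offDiag, g p.1 p.2 := by
  calc #(univ : Finset α).offDiag • ∑ φ : Perm α, g (φ i) (φ j)
      = ∑ p ∈ univ.offDiag, ∑ φ : Perm α, g (φ p.1) (φ p.2) := by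
        rw [← sum_const]
        exact sum_congr rfl fun p hp => sum_apply₂_eq_sum_apply₂ g hij (mem_offDiag.mp hp).2.2
    _ = ∑ φ : Perm α, ∑ p ∈ univ.offDiag, g p.1 p.2 := by
        rw [sum_comm]
        exact sum_congr rfl fun φ _ => sum_offDiag_apply φ g
    _ = (Fintype.card α).factorial • ∑ p ∈ univ.offDiag, g p.1 p.2 := by
        rw [sum_const, card_univ, Fintype.card_perm]

section Average

variable {K : Type*} [Field K] [CharZero K]

theorem sum_apply_div_factorial (g : α → K) (i : α) :
    (∑ φ : Perm α, g (φ i)) / (Fintype.card α).factorial = (∑ r, g r) / Fintype.card α := by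
  have : Nonempty α := ⟨i⟩
  have hn : (Fintype.card α : K) ≠ 0 := Nat.cast_ne_zero.mpr Fintype.card_ne_zero
  have h := card_nsmul_sum_apply g i
  rw [nsmul_eq_mul, nsmul_eq_mul] at h
  rw [div_eq_div_iff (Nat.cast_ne_zero.mpr (Nat.factorial_ne_zero _)) hn]
  linear_combination h

theorem sum_apply₂_div_factorial (g : α → α → K) {i j : α} (hij : i ≠ j) :
    (∑ φ : Perm α, g (φ i) (φ j)) / (Fintype.card α).factorial =
      (∑ p ∈ univ.offDiag, g p.1 p.2) / (Fintype.card α * (Fintype.card α - 1)) := by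
  have hcard :
      ((#(univ : Finset α).offDiag : ℕ) : K) = Fintype.card α * (Fintype.card α - 1) := by
    rw [offDiag_card, card_univ, Nat.cast_sub (Nat.le_mul_self _)]
    push_cast
    ring
  have hn : (Fintype.card α : K) * (Fintype.card α - 1) ≠ 0 := by
    rw [← hcard, Nat.cast_ne_zero, ← pos_iff_ne_zero, card_pos]
    exact ⟨(i, j), by simpa using hij⟩
  have h := card_offDiag_nsmul_sum_apply₂ g hij
  rw [nsmul_eq_mul, nsmul_eq_mul, hcard] at h
  rw [div_eq_div_iff (Nat.cast_ne_zero.mpr (Nat.factorial_ne_zero _)) hn]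
  linear_combination h

end Average

end Equiv.Perm

theorem stmt_13_general (n : ℕ) (A B : Matrix (Fin n) (Fin n) ℝ) :
    (1 / (Nat.factorial n : ℝ)) * ∑ φ : Equiv.Perm (Fin n), qapCost A B φ =
      (1 / ((n : ℝ) * ((n : ℝ) - 1))) *
          (∑ p ∈ Finset.univ.offDiag, A p.1 p.2) *
          (∑ p ∈ Finset.univ.offDiag, B p.1 p.2)
        + (1 / (n : ℝ)) * (∑ i, A i i) * (∑ r, B r r) := by
  have hdiag (i : Fin n) :
      (∑ φ : Equiv.Perm (Fin n), B (φ i) (φ i)) / n.factorial = (∑ r, B r r) / n := by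
    simpa using Equiv.Perm.sum_apply_div_factorial (fun r => B r r) i
  have hoffDiag (p) (hp : p ∈ (univ : Finset (Fin n)).offDiag) :
      (∑ φ : Equiv.Perm (Fin n), B (φ p.1) (φ p.2)) / n.factorial =
        (∑ q ∈ univ.offDiag, B q.1 q.2) / (n * (n - 1)) := by
    simpa using Equiv.Perm.sum_apply₂_div_factorial B (mem_offDiag.mp hp).2.2
  calc (1 / (n.factorial : ℝ)) * ∑ φ : Equiv.Perm (Fin n), qapCost A B φ
      = ∑ i, ∑ j, A i j * ((∑ φ : Equiv.Perm (Fin n), B (φ i) (φ j)) / n.factorial) := by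
        simp only [qapCost, mul_sum, sum_div]
        rw [sum_comm]
        refine sum_congr rfl fun i _ => ?_
        rw [sum_comm]
        exact sum_congr rfl fun j _ => sum_congr rfl fun φ _ => by ring
    _ = ∑ i, A i i * ((∑ r, B r r) / n) +
          ∑ p ∈ univ.offDiag, A p.1 p.2 * ((∑ q ∈ univ.offDiag, B q.1 q.2) / (n * (n - 1))) := by
        rw [sum_sum_eq_sum_add_sum_offDiag]
        congr 1
        · exact sum_congr rfl fun i _ => by rw [hdiag]
        · exact sum_congr rfl fun p hp => by rw [hoffDiag p hp]
    _ = _ := by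
        rw [← sum_mul, ← sum_mul]
        ring

theorem stmt_13 (n : ℕ) (hn : 2 ≤ n) (A B : Matrix (Fin n) (Fin n) ℝ) :
    (1 / (Nat.factorial n : ℝ)) * ∑ φ : Equiv.Perm (Fin n), qapCost A B φ =
      (1 / ((n : ℝ) * ((n : ℝ) - 1))) *
          (∑ p ∈ Finset.univ.offDiag, A p.1 p.2) *
          (∑ p ∈ Finset.univ.offDiag, B p.1 p.2)
        + (1 / (n : ℝ)) * (∑ i, A i i) * (∑ r, B r r) :=
  stmt_13_general n A B
end

section
/- Let n ≥ 3, and fix x, y ∈ N. The conditional expected QAP cost over permutations fixing φ(x) = y satisfies: E[Q_{A,B}(φ) | φ(x)=y] = (1/((n−1)(n−2))) (Σ_{(i,j)∈M_x²} a_{ij})(Σ_{(r,s)∈M_y²} b_{rs}) + (1/(n−1)) (Σ_{i∈N_x} a_{ii})(Σ_{r∈N_y} b_{rr}) + (1/(n−1)) (Σ_{i∈N_x} a_{ix})(Σ_{r∈N_y} b_{ry}) + (1/(n−1)) (Σ_{j∈N_x} a_{xj})(Σ_{s∈N_y} b_{ys}) + a_{xx} b_{yy}, where the expectation is uniform over the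 (n−1)! permutations with φ(x) = y. -/
/-!
Under the condition `φ x = y`, a summand `A i j * B (φ i) (φ j)` of the cost behaves according to
the position of `(i, j)` relative to `x`: for `i ≠ x` the value `φ i` is equidistributed on
`N \ {y}`, and for distinct `i, j ≠ x` the pair `(φ i, φ j)` is equidistributed on the
off-diagonal of `(N \ {y})²`. Both facts come from counting: the permutations extending a given
injection of a `k`-element set form a coset of its pointwise stabiliser, so there are `(n - k)!`
of them. Splitting the double sum over `(i, j)` into the off-diagonal of `(N \ {x})²`, the
diagonal of `N \ {x}`, the column and the row of `x`, and the corner `(x, x)` gives the five terms.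
-/

open Finset Function

namespace Finset
variable {M : Type*} [AddCommMonoid M]

section
variable {α : Type*} [DecidableEq α]

theorem sum_product_self_eq_offDiag_add (s : Finset α) (F : α → α → M) :
    ∑ i ∈ s, ∑ j ∈ s, F i j = ∑ p ∈ s.offDiag, F p.1 p.2 + ∑ i ∈ s, F i i := by
  rw [← sum_product', ← diag_union_offDiag, sum_union (disjoint_diag_offDiag s), add_comm, diag,
    sum_map]
  rfl

theorem sum_sum_eq_offDiag_erase_add [Fintype α] (x : α) (F : α → α → M) :
    ∑ i, ∑ j, F i j = ∑ p ∈ (univ.erase x).offDiag, F p.1 p.2 + ∑ i ∈ univ.erase x, F i i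
      + ∑ i ∈ univ.erase x, F i x + ∑ j ∈ univ.erase x, F x j + F x x := by
  simp only [← add_sum_erase _ _ (mem_univ x), sum_add_distrib,
    sum_product_self_eq_offDiag_add]
  abel

end

theorem sum_comp_of_card_fiber_eq {ι κ : Type*} [DecidableEq κ]
    {s : Finset ι} {t : Finset κ} {g : ι → κ} (hg : ∀ a ∈ s, g a ∈ t) {c : ℕ}
    (hc : ∀ b ∈ t, #{a ∈ s | g a = b} = c) (F : κ → M) :
    ∑ a ∈ s, F (g a) = c • ∑ b ∈ t, F b := by
  rw [← sum_fiberwise_of_maps_to hg, smul_sum]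
  refine sum_congr rfl fun b hb => ?_
  rw [sum_congr rfl fun a ha => by rw [(mem_filter.1 ha).2], sum_const, hc b hb]

theorem sum_mul_of_forall_eq {ι R : Type*} [NonUnitalNonAssocSemiring R] {s : Finset ι}
    {f g : ι → R} {c : R} (h : ∀ i ∈ s, g i = c) : ∑ i ∈ s, f i * g i = (∑ i ∈ s, f i) * c := by
  rw [sum_mul]
  exact sum_congr rfl fun i hi => by rw [h i hi]

end Finset

theorem injective_triple_of_ne {α : Type*} {a b c : α} (hab : a ≠ b) (hac : a ≠ c) (hbc : b ≠ c) :
    Injective ![a, b, c] := by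
  simp only [Matrix.vecCons, Fin.cons_injective_iff]
  simp [hab, hac, hbc, injective_of_subsingleton]

namespace Equiv.Perm

variable {α : Type*} [Fintype α] [DecidableEq α]

theorem card_fixing_range {ι : Type*} [Fintype ι] {f : ι → α} (hf : Injective f) :
    #{σ : Perm α | ∀ m, σ (f m) = f m} = (Fintype.card α - Fintype.card ι).factorial := by
  have e : {σ : Perm α // ∀ m, σ (f m) = f m} ≃ {σ : Perm α // ∀ a, ¬ a ∉ Set.range f → σ a = a} :=
    subtypeEquivRight fun σ => by simp
  rw [← Fintype.card_subtype, Fintype.card_congr (e.trans (Perm.subtypeEquivSubtypePerm _).symm),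
    Fintype.card_perm, Fintype.card_subtype_compl, Set.card_range_of_injective hf]

theorem card_extending_pair {ι : Type*} [Fintype ι] {f g : ι → α} (hf : Injective f)
    (hg : Injective g) :
    #{σ : Perm α | ∀ m, σ (f m) = g m} = (Fintype.card α - Fintype.card ι).factorial := by
  obtain ⟨τ, hτ⟩ := exists_extending_pair f g hf hg
  rw [← card_fixing_range hf]
  refine card_bij' (fun σ _ => τ⁻¹ * σ) (fun σ _ => τ * σ) ?_ ?_ (fun _ _ => by group)
    (fun _ _ => by group)
  · simp +contextual [← hτ, mul_apply]
  · simp +contextual [← hτ, mul_apply]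

variable {M : Type*} [AddCommMonoid M]

theorem sum_apply_of_apply_eq {x y i : α} (hix : i ≠ x) (F : α → M) :
    ∑ σ : Perm α with σ x = y, F (σ i) =
      (Fintype.card α - 2).factorial • ∑ r ∈ univ.erase y, F r := by
  refine sum_comp_of_card_fiber_eq (fun σ hσ => ?_) (fun r hr => ?_) F
  · rw [mem_erase, ← (mem_filter.1 hσ).2]
    exact ⟨σ.injective.ne hix, mem_univ _⟩
  · have := card_extending_pair (injective_pair_iff_ne.2 hix.symm)
      (injective_pair_iff_ne.2 (ne_of_mem_erase hr).symm)
    simpa [filter_filter, Fin.forall_fin_two] using this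

theorem sum_apply_apply_of_apply_eq {x y i j : α} (hix : i ≠ x) (hjx : j ≠ x) (hij : i ≠ j)
    (F : α → α → M) :
    ∑ σ : Perm α with σ x = y, F (σ i) (σ j) =
      (Fintype.card α - 3).factorial • ∑ p ∈ (univ.erase y).offDiag, F p.1 p.2 := by
  refine sum_comp_of_card_fiber_eq (g := fun σ : Perm α => (σ i, σ j)) (fun σ hσ => ?_)
    (fun p hp => ?_) (fun p => F p.1 p.2)
  · rw [mem_offDiag, mem_erase, mem_erase, ← (mem_filter.1 hσ).2]
    exact ⟨⟨σ.injective.ne hix, mem_univ _⟩, ⟨σ.injective.ne hjx, mem_univ _⟩, σ.injective.ne hij⟩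
  · obtain ⟨hr, hs, hrs⟩ := mem_offDiag.1 hp
    have := card_extending_pair (injective_triple_of_ne hix.symm hjx.symm hij)
      (injective_triple_of_ne (ne_of_mem_erase hr).symm (ne_of_mem_erase hs).symm hrs)
    simpa [filter_filter, Fin.forall_fin_succ, Prod.ext_iff, and_assoc] using this

theorem card_apply_eq (x y : α) : #{σ : Perm α | σ x = y} = (Fintype.card α - 1).factorial := by
  simpa using card_extending_pair (injective_of_subsingleton ![x]) (injective_of_subsingleton ![y])

theorem sum_quadratic_assignment_of_apply_eq {R : Type*} [CommSemiring R] (A B : Matrix α α R)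
    (x y : α) :
    ∑ σ : Perm α with σ x = y, ∑ i, ∑ j, A i j * B (σ i) (σ j) =
      (Fintype.card α - 3).factorial * (∑ p ∈ (univ.erase x).offDiag, A p.1 p.2) *
          ∑ p ∈ (univ.erase y).offDiag, B p.1 p.2
        + (Fintype.card α - 2).factorial * (∑ i ∈ univ.erase x, A i i) * ∑ r ∈ univ.erase y, B r r
        + (Fintype.card α - 2).factorial * (∑ i ∈ univ.erase x, A i x) * ∑ r ∈ univ.erase y, B r y
        + (Fintype.card α - 2).factorial * (∑ j ∈ univ.erase x, A x j) * ∑ s ∈ univ.erase y, B y s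
        + (Fintype.card α - 1).factorial * A x x * B y y := by
  have hx : ∀ σ ∈ ({σ : Perm α | σ x = y} : Finset (Perm α)), σ x = y :=
    fun σ hσ => (mem_filter.1 hσ).2
  have hoff : ∀ p ∈ (univ.erase x).offDiag, ∑ σ : Perm α with σ x = y, B (σ p.1) (σ p.2) =
      (Fintype.card α - 3).factorial • ∑ p ∈ (univ.erase y).offDiag, B p.1 p.2 := fun p hp => by
    obtain ⟨hi, hj, hij⟩ := mem_offDiag.1 hp
    exact sum_apply_apply_of_apply_eq (ne_of_mem_erase hi) (ne_of_mem_erase hj) hij B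
  have hdiag : ∀ i ∈ univ.erase x, ∑ σ : Perm α with σ x = y, B (σ i) (σ i) =
      (Fintype.card α - 2).factorial • ∑ r ∈ univ.erase y, B r r := fun i hi =>
    sum_apply_of_apply_eq (ne_of_mem_erase hi) fun r => B r r
  have hcol : ∀ i ∈ univ.erase x, ∑ σ : Perm α with σ x = y, B (σ i) (σ x) =
      (Fintype.card α - 2).factorial • ∑ r ∈ univ.erase y, B r y := fun i hi => by
    rw [sum_congr rfl fun σ hσ => by rw [hx σ hσ]]
    exact sum_apply_of_apply_eq (ne_of_mem_erase hi) fun r => B r y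
  have hrow : ∀ j ∈ univ.erase x, ∑ σ : Perm α with σ x = y, B (σ x) (σ j) =
      (Fintype.card α - 2).factorial • ∑ s ∈ univ.erase y, B y s := fun j hj => by
    rw [sum_congr rfl fun σ hσ => by rw [hx σ hσ]]
    exact sum_apply_of_apply_eq (ne_of_mem_erase hj) (B y)
  have hcorner : ∑ σ : Perm α with σ x = y, B (σ x) (σ x) =
      (Fintype.card α - 1).factorial • B y y := by
    rw [sum_congr rfl fun σ hσ => by rw [hx σ hσ], sum_const, card_apply_eq]
  rw [sum_comm, sum_congr rfl fun i _ => sum_comm]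
  simp only [← mul_sum]
  rw [sum_sum_eq_offDiag_erase_add x, sum_mul_of_forall_eq hoff, sum_mul_of_forall_eq hdiag,
    sum_mul_of_forall_eq hcol, sum_mul_of_forall_eq hrow, hcorner]
  simp only [nsmul_eq_mul]
  ring

end Equiv.Perm

theorem stmt_16 (n : ℕ) (hn : 3 ≤ n) (x y : Fin n)
    (A B : Matrix (Fin n) (Fin n) ℝ) :
    (1 / (Nat.factorial (n - 1) : ℝ)) *
        ∑ φ ∈ Finset.univ.filter (fun φ : Equiv.Perm (Fin n) => φ x = y),
          qapCost A B φ =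
      (1 / (((n : ℝ) - 1) * ((n : ℝ) - 2))) *
          (∑ p ∈ (Finset.univ.erase x).offDiag, A p.1 p.2) *
          (∑ p ∈ (Finset.univ.erase y).offDiag, B p.1 p.2)
        + (1 / ((n : ℝ) - 1)) *
            (∑ i ∈ Finset.univ.erase x, A i i) * (∑ r ∈ Finset.univ.erase y, B r r)
        + (1 / ((n : ℝ) - 1)) *
            (∑ i ∈ Finset.univ.erase x, A i x) * (∑ r ∈ Finset.univ.erase y, B r y)
        + (1 / ((n : ℝ) - 1)) *
            (∑ j ∈ Finset.univ.erase x, A x j) * (∑ s ∈ Finset.univ.erase y, B y s)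
        + A x x * B y y := by
  obtain ⟨m, rfl⟩ := Nat.exists_eq_add_of_le' hn
  simp only [qapCost]
  rw [Equiv.Perm.sum_quadratic_assignment_of_apply_eq, Fintype.card_fin, Nat.add_sub_cancel,
    show m + 3 - 1 = m + 1 + 1 from rfl, show m + 3 - 2 = m + 1 from rfl,
    show ((m + 3 : ℕ) : ℝ) - 1 = m + 2 by push_cast; ring,
    show ((m + 3 : ℕ) : ℝ) - 2 = m + 1 by push_cast; ring]
  simp only [Nat.factorial_succ]
  push_cast
  field_simp
  ring
end
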